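/- The proof system UM is complete: every formula φ ∈ L that is valid (true in every epistemic state) is derivable in UM. -/

import Mathlib

/-- Formulas of the language `L` of epistemic logic with updates (events of
epistemic and/or ontic change).  The constructor `upd` inlines an update
`(U,e)`: an event type `E`, accessibility relations on events, preconditions,
postconditions, and the actual event `e`.  `⊤` and `⊥` are included as the
usual primitives. -/
inductive Form (A P : Type) : Type 1 where
  | atom : P → Form A P
  | top : Form A P
  | bot : Form A P
  | neg : Form A P → Form A P
  | and : Form A P → Form A P → Form A P
  | box : A → Form A P → Form A P
  | cbox : Set A → Form A P → Form A P
  | upd : (E : Type) → (A → E → E → Prop) → (E → Form A P) → (E → P → Form A P) →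
      E → Form A P → Form A P

/-- An update model `U = (E, rel, pre, post)`. -/
structure Upd (A P : Type) : Type 1 where
  E : Type
  rel : A → E → E → Prop
  pre : E → Form A P
  post : E → P → Form A P

/-- An epistemic model `M = (S, R, V)`. -/
structure Model (A P : Type) : Type 1 where
  S : Type
  R : A → S → S → Prop
  V : P → S → Prop

/-- The formula `[U,e]φ`. -/
def Form.updF {A P : Type} (U : Upd A P) (e : U.E) (φ : Form A P) : Form A P :=
  Form.upd U.E U.rel U.pre U.post e φ

/-- The product construction, parameterised by the satisfaction relations of the
preconditions and postconditions of the events. -/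
def prodM {A P : Type} (M : Model A P) (E : Type) (rel : A → E → E → Prop)
    (preS : E → M.S → Prop) (postS : E → M.S → P → Prop) : Model A P where
  S := { x : M.S × E // preS x.2 x.1 }
  R a x y := M.R a x.1.1 y.1.1 ∧ rel a x.1.2 y.1.2
  V p x := postS x.1.2 x.1.1 p

/-- Satisfaction: `sat φ M s` is `(M,s) ⊨ φ`. -/
def sat {A P : Type} : Form A P → (M : Model A P) → M.S → Prop
  | .atom p, M, s => M.V p s
  | .top, _, _ => True
  | .bot, _, _ => False
  | .neg φ, M, s => ¬ sat φ M s
  | .and φ ψ, M, s => sat φ M s ∧ sat ψ M s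
  | .box a φ, M, s => ∀ t, M.R a s t → sat φ M t
  | .cbox B φ, M, s =>
      ∀ t, Relation.ReflTransGen (fun x y => ∃ a ∈ B, M.R a x y) s t → sat φ M t
  | .upd E rel pre post e φ, M, s =>
      ∀ h : sat (pre e) M s,
        sat φ (prodM M E rel (fun f t => sat (pre f) M t) (fun f t p => sat (post f p) M t))
          ⟨(s, e), h⟩

/-- The product update `M ⊗ U`; its domain is `{(t,f) | (M,t) ⊨ pre(f)}`. -/
def Model.prodUpd {A P : Type} (M : Model A P) (U : Upd A P) : Model A P :=
  prodM M U.E U.rel (fun f t => sat (U.pre f) M t) (fun f t p => sat (U.post f p) M t)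

/-- Well-formedness of a formula: all event sets of update models occurring in it are
finite and nonempty, and all postconditions differ from the identity `p ↦ p` on only
finitely many atoms (this finite set being the domain `dom(post(e))`). -/
def Form.WF {A P : Type} : Form A P → Prop
  | .atom _ => True
  | .top => True
  | .bot => True
  | .neg φ => φ.WF
  | .and φ ψ => φ.WF ∧ ψ.WF
  | .box _ φ => φ.WF
  | .cbox _ φ => φ.WF
  | .upd E _ pre post _ φ =>
      Nonempty E ∧ Finite E ∧ (∀ f, (pre f).WF) ∧ (∀ f p, (post f p).WF) ∧
      (∀ f, {p | post f p ≠ Form.atom p}.Finite) ∧ φ.WF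

/-- Well-formedness of an update model: the event set is finite and nonempty, the
preconditions and postconditions are well-formed formulas, and each postcondition
differs from the identity on only finitely many atoms, the set
`{p | post e p ≠ atom p}` being the domain `dom(post(e))`. -/
def Upd.WF {A P : Type} (U : Upd A P) : Prop :=
  Nonempty U.E ∧ Finite U.E ∧ (∀ f, (U.pre f).WF) ∧ (∀ f p, (U.post f p).WF) ∧
  (∀ f, {p | U.post f p ≠ Form.atom p}.Finite)

/-- Disjunction, as the usual abbreviation. -/
def Form.or {A P : Type} (φ ψ : Form A P) : Form A P := (φ.neg.and ψ.neg).neg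

/-- Implication, as the usual abbreviation. -/
def Form.imp {A P : Type} (φ ψ : Form A P) : Form A P := (φ.and ψ.neg).neg

/-- Bi-implication, as the usual abbreviation. -/
def Form.biImp {A P : Type} (φ ψ : Form A P) : Form A P := (φ.imp ψ).and (ψ.imp φ)

/-- Finite conjunction of a list of formulas. -/
def bigAnd {A P : Type} (l : List (Form A P)) : Form A P := l.foldr Form.and Form.top

/-- Finite disjunction of a list of formulas. -/
def bigOr {A P : Type} (l : List (Form A P)) : Form A P := l.foldr Form.or Form.bot

open Classical in
/-- Composition `(U,e) ; (U',e')` of update models: the underlying update model has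
events `E × E'`, `pre''(f,f') = pre(f) ∧ [U,f]pre'(f')`, and for `p ∈ dom(post''(f,f'))
= dom(post(f)) ∪ dom(post'(f'))`: `post''(f,f')(p) = post(f)(p)` if `p ∉ dom(post'(f'))`
and `[U,f]post'(f')(p)` otherwise; the point is the pair `(e,e')`. -/
noncomputable def Upd.comp {A P : Type} (U U' : Upd A P) : Upd A P where
  E := U.E × U'.E
  rel a x y := U.rel a x.1 y.1 ∧ U'.rel a x.2 y.2
  pre x := (U.pre x.1).and (Form.updF U x.1 (U'.pre x.2))
  post x p :=
    if U'.post x.2 p = Form.atom p then U.post x.1 p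
    else Form.updF U x.1 (U'.post x.2 p)

/-- Propositional formulas in `n` variables (templates for instantiations of
propositional tautologies). -/
inductive PropForm : ℕ → Type where
  | var {n : ℕ} : Fin n → PropForm n
  | top {n : ℕ} : PropForm n
  | bot {n : ℕ} : PropForm n
  | neg {n : ℕ} : PropForm n → PropForm n
  | and {n : ℕ} : PropForm n → PropForm n → PropForm n

/-- Boolean evaluation of a propositional template. -/
def PropForm.eval {n : ℕ} (v : Fin n → Bool) : PropForm n → Bool
  | .var i => v i
  | .top => true
  | .bot => false
  | .neg t => !(t.eval v)
  | .and t u => t.eval v && u.eval v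

/-- Substitution of formulas for the variables of a propositional template. -/
def PropForm.subst {A P : Type} {n : ℕ} (σ : Fin n → Form A P) : PropForm n → Form A P
  | .var i => σ i
  | .top => Form.top
  | .bot => Form.bot
  | .neg t => Form.neg (t.subst σ)
  | .and t u => Form.and (t.subst σ) (u.subst σ)

/-- A propositional template is a tautology: true under every Boolean valuation. -/
def PropForm.Taut {n : ℕ} (t : PropForm n) : Prop := ∀ v : Fin n → Bool, t.eval v = true

/-- The proof system UM. -/
inductive Deriv {A P : Type} : Form A P → Prop where
  /-- all instantiations of propositional tautologies -/
  | taut {n : ℕ} (t : PropForm n) (σ : Fin n → Form A P) (ht : t.Taut)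
      (hσ : ∀ i, (σ i).WF) : Deriv (t.subst σ)
  /-- distribution for `[a]` -/
  | distBox (a : A) (φ ψ : Form A P) (hφ : φ.WF) (hψ : ψ.WF) :
      Deriv (Form.imp (Form.box a (Form.imp φ ψ)) (Form.imp (Form.box a φ) (Form.box a ψ)))
  /-- distribution for `[B*]` -/
  | distCbox (B : Set A) (φ ψ : Form A P) (hφ : φ.WF) (hψ : ψ.WF) :
      Deriv (Form.imp (Form.cbox B (Form.imp φ ψ)) (Form.imp (Form.cbox B φ) (Form.cbox B ψ)))
  /-- distribution for `[U,e]` -/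
  | distUpd (U : Upd A P) (e : U.E) (hU : U.WF) (φ ψ : Form A P) (hφ : φ.WF) (hψ : ψ.WF) :
      Deriv (Form.imp (Form.updF U e (Form.imp φ ψ))
        (Form.imp (Form.updF U e φ) (Form.updF U e ψ)))
  /-- modus ponens -/
  | mp {φ ψ : Form A P} : Deriv (Form.imp φ ψ) → Deriv φ → Deriv ψ
  /-- necessitation for `[a]` -/
  | necBox (a : A) {φ : Form A P} : Deriv φ → Deriv (Form.box a φ)
  /-- necessitation for `[B*]` -/
  | necCbox (B : Set A) {φ : Form A P} : Deriv φ → Deriv (Form.cbox B φ)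
  /-- necessitation for `[U,e]` -/
  | necUpd (U : Upd A P) (e : U.E) (hU : U.WF) {φ : Form A P} :
      Deriv φ → Deriv (Form.updF U e φ)
  /-- update and atoms -/
  | updAtom (U : Upd A P) (e : U.E) (hU : U.WF) (p : P) :
      Deriv (Form.biImp (Form.updF U e (Form.atom p)) (Form.imp (U.pre e) (U.post e p)))
  /-- update and negation -/
  | updNeg (U : Upd A P) (e : U.E) (hU : U.WF) (φ : Form A P) (hφ : φ.WF) :
      Deriv (Form.biImp (Form.updF U e (Form.neg φ))
        (Form.imp (U.pre e) (Form.neg (Form.updF U e φ))))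
  /-- update and conjunction -/
  | updAnd (U : Upd A P) (e : U.E) (hU : U.WF) (φ ψ : Form A P) (hφ : φ.WF) (hψ : ψ.WF) :
      Deriv (Form.biImp (Form.updF U e (Form.and φ ψ))
        (Form.and (Form.updF U e φ) (Form.updF U e ψ)))
  /-- update and knowledge (`lf` enumerates `{f | (e,f) ∈ R(a)}`) -/
  | updBox (U : Upd A P) (e : U.E) (hU : U.WF) (a : A) (φ : Form A P) (hφ : φ.WF)
      (lf : List U.E) (hlf : ∀ f, f ∈ lf ↔ U.rel a e f) :
      Deriv (Form.biImp (Form.updF U e (Form.box a φ))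
        (Form.imp (U.pre e) (bigAnd (lf.map fun f => Form.box a (Form.updF U f φ)))))
  /-- update composition -/
  | updComp (U : Upd A P) (e : U.E) (U' : Upd A P) (e' : U'.E) (hU : U.WF) (hU' : U'.WF)
      (φ : Form A P) (hφ : φ.WF) :
      Deriv (Form.biImp (Form.updF U e (Form.updF U' e' φ))
        (Form.updF (U.comp U') (e, e') φ))
  /-- mix (`lB` enumerates `B`; `[B]ψ` is the conjunction `⋀_{a ∈ B} [a]ψ`) -/
  | mix (B : Set A) (lB : List A) (hlB : ∀ a, a ∈ lB ↔ a ∈ B) (φ : Form A P) (hφ : φ.WF) :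
      Deriv (Form.imp (Form.cbox B φ)
        (Form.and φ (bigAnd (lB.map fun a => Form.box a (Form.cbox B φ)))))
  /-- induction axiom -/
  | induc (B : Set A) (lB : List A) (hlB : ∀ a, a ∈ lB ↔ a ∈ B) (φ : Form A P) (hφ : φ.WF) :
      Deriv (Form.imp (Form.cbox B (Form.imp φ (bigAnd (lB.map fun a => Form.box a φ))))
        (Form.imp φ (Form.cbox B φ)))
  /-- updates and common knowledge -/
  | updCK (U : Upd A P) (e : U.E) (hU : U.WF) (B : Set A) (φ : Form A P) (hφ : φ.WF)
      (χ : U.E → Form A P) (hχ : ∀ f, (χ f).WF)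
      (h1 : ∀ f, Relation.ReflTransGen (fun x y => ∃ a ∈ B, U.rel a x y) e f →
        Deriv (Form.imp (χ f) (Form.updF U f φ)))
      (h2 : ∀ f, Relation.ReflTransGen (fun x y => ∃ a ∈ B, U.rel a x y) e f →
        ∀ a ∈ B, ∀ g, U.rel a f g →
          Deriv (Form.imp (Form.and (χ f) (U.pre f)) (Form.box a (χ g)))) :
      Deriv (Form.imp (χ e) (Form.updF U e (Form.cbox B φ)))


/-!
Completeness is proved with a finite canonical model. The closure of `φ` is a finite list of
formulas containing `φ` and closed under subformulas and under the formulas the reduction axioms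
reduce to; moreover `[B*]ψ` brings in every `[a][B*]ψ`, and `[U,e][B*]ψ` brings in `[U,f][B*]ψ`
and `[a][U,f][B*]ψ` for all agents `a` and events `f`. It is computed by well-founded recursion
on a complexity measure that every reduction axiom decreases.

The canonical states are the consistent Boolean assignments to the closure, identified with the
conjunction of the corresponding literals (their description). The truth lemma, "a state
satisfies a formula of the closure iff its description proves it", goes by induction on the
complexity. For `[B*]φ` and `[U,e][B*]φ` the invariant fed to the induction axiom, respectively to
the updates-and-common-knowledge rule, is the disjunction of the descriptions of the states at
which the formula holds. Finally, the disjunction of all descriptions is an instance of a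
propositional tautology, so a formula proved by every consistent description is derivable.
-/

section Completeness

variable {A P : Type}

local notation "⊥'" => Form.bot
local notation "⊤'" => Form.top
local prefix:max "∼" => Form.neg
local infixr:62 " ⋏ " => Form.and
local infixr:60 " ⟶ " => Form.imp
local infixr:60 " ⋎ " => Form.or
local infix:58 " ⟷ " => Form.biImp

namespace Form

@[simp] lemma wf_neg {φ : Form A P} : (∼φ).WF ↔ φ.WF := Iff.rfl
@[simp] lemma wf_and {φ ψ : Form A P} : (φ ⋏ ψ).WF ↔ φ.WF ∧ ψ.WF := Iff.rfl
@[simp] lemma wf_box {a : A} {φ : Form A P} : (box a φ).WF ↔ φ.WF := Iff.rfl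
@[simp] lemma wf_cbox {B : Set A} {φ : Form A P} : (cbox B φ).WF ↔ φ.WF := Iff.rfl
@[simp] lemma wf_imp {φ ψ : Form A P} : (φ ⟶ ψ).WF ↔ φ.WF ∧ ψ.WF := Iff.rfl
@[simp] lemma wf_or {φ ψ : Form A P} : (φ ⋎ ψ).WF ↔ φ.WF ∧ ψ.WF := Iff.rfl
@[simp] lemma wf_biImp {φ ψ : Form A P} : (φ ⟷ ψ).WF ↔ φ.WF ∧ ψ.WF := by
  simp only [biImp, wf_and, wf_imp]; tauto

lemma wf_updF_iff {U : Upd A P} {e : U.E} {φ : Form A P} :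
    (updF U e φ).WF ↔ U.WF ∧ φ.WF := by
  simp only [updF, WF, Upd.WF, and_assoc]

@[simp] lemma wf_bigAnd {l : List (Form A P)} : (bigAnd l).WF ↔ ∀ φ ∈ l, φ.WF := by
  induction l with
  | nil => simp [bigAnd, WF]
  | cons ψ l ih => simpa [bigAnd] using fun _ => ih

@[simp] lemma wf_bigOr {l : List (Form A P)} : (bigOr l).WF ↔ ∀ φ ∈ l, φ.WF := by
  induction l with
  | nil => simp [bigOr, WF]
  | cons ψ l ih => simpa [bigOr] using fun _ => ih

lemma WF.upd_model {E : Type} {rel : A → E → E → Prop} {pre : E → Form A P}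
    {post : E → P → Form A P} {e : E} {φ : Form A P} (h : (upd E rel pre post e φ).WF) :
    (Upd.mk E rel pre post).WF :=
  (wf_updF_iff (U := ⟨E, rel, pre, post⟩)).1 h |>.1

lemma WF.upd_body {E : Type} {rel : A → E → E → Prop} {pre : E → Form A P}
    {post : E → P → Form A P} {e : E} {φ : Form A P} (h : (upd E rel pre post e φ).WF) :
    φ.WF :=
  (wf_updF_iff (U := ⟨E, rel, pre, post⟩)).1 h |>.2

lemma WF.upd_of_upd {E : Type} {rel : A → E → E → Prop} {pre : E → Form A P}
    {post : E → P → Form A P} {e : E} {ψ : Form A P} (h : (upd E rel pre post e ψ).WF) (f : E)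
    {φ : Form A P} (hφ : φ.WF) : (upd E rel pre post f φ).WF :=
  ⟨h.1, h.2.1, h.2.2.1, h.2.2.2.1, h.2.2.2.2.1, hφ⟩

end Form

namespace Upd

lemma WF.pre {U : Upd A P} (hU : U.WF) (e : U.E) : (U.pre e).WF := hU.2.2.1 e

lemma WF.post {U : Upd A P} (hU : U.WF) (e : U.E) (p : P) : (U.post e p).WF := hU.2.2.2.1 e p

lemma WF.updF {U : Upd A P} (hU : U.WF) (e : U.E) {φ : Form A P} (hφ : φ.WF) :
    (Form.updF U e φ).WF :=
  Form.wf_updF_iff.2 ⟨hU, hφ⟩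

open Classical in
lemma comp_post {U U' : Upd A P} (x : (U.comp U').E) (p : P) :
    (U.comp U').post x p =
      if U'.post x.2 p = .atom p then U.post x.1 p else Form.updF U x.1 (U'.post x.2 p) :=
  rfl

lemma comp_pre {U U' : Upd A P} (x : (U.comp U').E) :
    (U.comp U').pre x = U.pre x.1 ⋏ Form.updF U x.1 (U'.pre x.2) :=
  rfl

lemma WF.comp {U U' : Upd A P} (hU : U.WF) (hU' : U'.WF) : (U.comp U').WF := by
  obtain ⟨⟨e⟩, _, -, -, hdom⟩ := id hU
  obtain ⟨⟨e'⟩, _, -, -, hdom'⟩ := id hU'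
  refine ⟨⟨(e, e')⟩, inferInstanceAs (Finite (U.E × U'.E)),
    fun x => ⟨hU.pre x.1, hU.updF _ (hU'.pre x.2)⟩, fun x p => ?_,
    fun x => ((hdom x.1).union (hdom' x.2)).subset fun p hp => ?_⟩
  · rw [comp_post]
    split
    · exact hU.post x.1 p
    · exact hU.updF _ (hU'.post x.2 p)
  · by_contra hc
    simp only [Set.mem_union, Set.mem_ofPred, not_or, not_not] at hc
    exact hp (by rw [comp_post, if_pos hc.2, hc.1])

end Upd

lemma PropForm.wf_subst {n : ℕ} {σ : Fin n → Form A P} (hσ : ∀ i, (σ i).WF) (t : PropForm n) :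
    (t.subst σ).WF := by
  induction t with
  | var i => exact hσ i
  | top | bot => trivial
  | neg t ih => exact ih
  | and t u ih₁ ih₂ => exact ⟨ih₁, ih₂⟩

lemma Deriv.wf {φ : Form A P} (h : Deriv φ) : φ.WF := by
  induction h with
  | taut t σ _ hσ => exact t.wf_subst hσ
  | distBox _ _ _ hφ hψ | distCbox _ _ _ hφ hψ => simp [hφ, hψ]
  | distUpd U e hU φ ψ hφ hψ =>
      simp [hU.updF e (φ := φ ⟶ ψ) ⟨hφ, hψ⟩, hU.updF e hφ, hU.updF e hψ]
  | mp _ _ ih _ => exact (Form.wf_imp.1 ih).2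
  | necBox _ _ ih | necCbox _ _ ih => exact ih
  | necUpd U e hU _ ih => exact hU.updF e ih
  | updAtom U e hU p => simp [hU.updF e (φ := .atom p) trivial, hU.pre e, hU.post e p]
  | updNeg U e hU φ hφ => simp [hU.updF e hφ, hU.updF e (φ := ∼φ) hφ, hU.pre e]
  | updAnd U e hU φ ψ hφ hψ =>
      simp [hU.updF e (φ := φ ⋏ ψ) ⟨hφ, hψ⟩, hU.updF e hφ, hU.updF e hψ]
  | updBox U e hU a φ hφ =>
      simp [hU.updF e (φ := .box a φ) hφ, hU.pre e, fun f => hU.updF f hφ]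
  | updComp U e U' e' hU hU' φ hφ =>
      simp [hU.updF e (hU'.updF e' hφ), (hU.comp hU').updF (e, e') hφ]
  | mix _ _ _ φ hφ | induc _ _ _ φ hφ => simp [hφ]
  | updCK U e hU _ _ hφ χ hχ => exact ⟨hχ e, hU.updF e hφ⟩


/-! ### Derived rules of UM -/

namespace PropForm

instance {n : ℕ} (t : PropForm n) : Decidable t.Taut :=
  inferInstanceAs (Decidable (∀ v : Fin n → Bool, t.eval v = true))

def imp {n : ℕ} (t u : PropForm n) : PropForm n := .neg (.and t (.neg u))

def or {n : ℕ} (t u : PropForm n) : PropForm n := .neg (.and (.neg t) (.neg u))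

abbrev X0 {n : ℕ} : PropForm (n + 1) := .var ⟨0, by omega⟩
abbrev X1 {n : ℕ} : PropForm (n + 2) := .var ⟨1, by omega⟩
abbrev X2 {n : ℕ} : PropForm (n + 3) := .var ⟨2, by omega⟩

end PropForm

open PropForm (X0 X1 X2)

namespace Deriv

lemma taut₁ (t : PropForm 1) (ht : t.Taut) {φ : Form A P} (hφ : φ.WF) :
    Deriv (t.subst ![φ]) :=
  .taut t _ ht (Fin.forall_fin_one.2 hφ)

lemma taut₂ (t : PropForm 2) (ht : t.Taut) {φ ψ : Form A P} (hφ : φ.WF) (hψ : ψ.WF) :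
    Deriv (t.subst ![φ, ψ]) :=
  .taut t _ ht (Fin.forall_fin_two.2 ⟨hφ, hψ⟩)

lemma taut₃ (t : PropForm 3) (ht : t.Taut) {φ ψ χ : Form A P} (hφ : φ.WF) (hψ : ψ.WF)
    (hχ : χ.WF) : Deriv (t.subst ![φ, ψ, χ]) :=
  .taut t _ ht (Fin.forall_fin_succ.2 ⟨hφ, Fin.forall_fin_two.2 ⟨hψ, hχ⟩⟩)

open PropForm

lemma mp₂ {φ ψ χ : Form A P} (h : Deriv (φ ⟶ ψ ⟶ χ)) (h₁ : Deriv φ) (h₂ : Deriv ψ) :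
    Deriv χ :=
  (h.mp h₁).mp h₂

lemma weaken {φ ψ : Form A P} (hφ : φ.WF) (h : Deriv ψ) : Deriv (φ ⟶ ψ) :=
  (taut₂ (imp X0 (imp X1 X0)) (by decide) h.wf hφ).mp h

lemma imp_trans {φ ψ χ : Form A P} (h₁ : Deriv (φ ⟶ ψ)) (h₂ : Deriv (ψ ⟶ χ)) :
    Deriv (φ ⟶ χ) := by
  obtain ⟨hφ, hψ⟩ := Form.wf_imp.1 h₁.wf
  exact mp₂ (taut₃ (imp (imp X0 X1) (imp (imp X1 X2) (imp X0 X2))) (by decide)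
    hφ hψ (Form.wf_imp.1 h₂.wf).2) h₁ h₂

lemma top : Deriv (⊤' : Form A P) :=
  taut₁ .top (by decide) (φ := (⊤' : Form A P)) trivial

lemma bot_imp {φ : Form A P} (hφ : φ.WF) : Deriv (⊥' ⟶ φ) :=
  taut₁ (imp .bot X0) (by decide) hφ

lemma biImp_mp {φ ψ : Form A P} (h : Deriv (φ ⟷ ψ)) : Deriv (φ ⟶ ψ) := by
  obtain ⟨hφ, hψ⟩ := Form.wf_biImp.1 h.wf
  exact (taut₂ (imp (.and (imp X0 X1) (imp X1 X0)) (imp X0 X1)) (by decide) hφ hψ).mp h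

lemma biImp_mpr {φ ψ : Form A P} (h : Deriv (φ ⟷ ψ)) : Deriv (ψ ⟶ φ) := by
  obtain ⟨hφ, hψ⟩ := Form.wf_biImp.1 h.wf
  exact (taut₂ (imp (.and (imp X0 X1) (imp X1 X0)) (imp X1 X0)) (by decide) hφ hψ).mp h

lemma imp_iff_of_imp_of_imp {δ φ ψ : Form A P} (h₁ : Deriv (φ ⟶ ψ)) (h₂ : Deriv (ψ ⟶ φ)) :
    Deriv (δ ⟶ φ) ↔ Deriv (δ ⟶ ψ) :=
  ⟨(imp_trans · h₁), (imp_trans · h₂)⟩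

lemma imp_iff_of_biImp {δ φ ψ : Form A P} (h : Deriv (φ ⟷ ψ)) :
    Deriv (δ ⟶ φ) ↔ Deriv (δ ⟶ ψ) :=
  imp_iff_of_imp_of_imp h.biImp_mp h.biImp_mpr

lemma imp_mp {δ φ ψ : Form A P} (h₁ : Deriv (δ ⟶ φ ⟶ ψ)) (h₂ : Deriv (δ ⟶ φ)) :
    Deriv (δ ⟶ ψ) := by
  obtain ⟨hδ, hφ, hψ⟩ : δ.WF ∧ φ.WF ∧ ψ.WF := by simpa using h₁.wf
  exact mp₂ (taut₃ (imp (imp X0 (imp X1 X2)) (imp (imp X0 X1) (imp X0 X2))) (by decide)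
    hδ hφ hψ) h₁ h₂

lemma imp_and_iff {δ φ ψ : Form A P} :
    Deriv (δ ⟶ φ ⋏ ψ) ↔ Deriv (δ ⟶ φ) ∧ Deriv (δ ⟶ ψ) := by
  refine ⟨fun h => ?_, fun ⟨h₁, h₂⟩ => ?_⟩
  · obtain ⟨-, hφ, hψ⟩ : δ.WF ∧ φ.WF ∧ ψ.WF := by simpa using h.wf
    exact ⟨imp_trans h (taut₂ (imp (.and X0 X1) X0) (by decide) hφ hψ),
      imp_trans h (taut₂ (imp (.and X0 X1) X1) (by decide) hφ hψ)⟩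
  · obtain ⟨hδ, hφ⟩ := Form.wf_imp.1 h₁.wf
    exact mp₂ (taut₃ (imp (imp X0 X1) (imp (imp X0 X2) (imp X0 (.and X1 X2)))) (by decide)
      hδ hφ (Form.wf_imp.1 h₂.wf).2) h₁ h₂

lemma imp_bot_of_imp_of_imp_neg {δ φ : Form A P} (h₁ : Deriv (δ ⟶ φ)) (h₂ : Deriv (δ ⟶ ∼φ)) :
    Deriv (δ ⟶ ⊥') := by
  obtain ⟨hδ, hφ⟩ := Form.wf_imp.1 h₁.wf
  exact mp₂ (taut₂ (imp (imp X0 X1) (imp (imp X0 (.neg X1)) (imp X0 .bot))) (by decide)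
    hδ hφ) h₁ h₂

lemma uncurry {φ ψ χ : Form A P} (h : Deriv (φ ⟶ ψ ⟶ χ)) : Deriv (φ ⋏ ψ ⟶ χ) := by
  obtain ⟨hφ, hψ, hχ⟩ : φ.WF ∧ ψ.WF ∧ χ.WF := by simpa using h.wf
  exact (taut₃ (imp (imp X0 (imp X1 X2)) (imp (.and X0 X1) X2)) (by decide) hφ hψ hχ).mp h

lemma bigAnd_imp_of_mem {l : List (Form A P)} {ψ : Form A P} (hl : ∀ χ ∈ l, χ.WF)
    (hψ : ψ ∈ l) : Deriv (bigAnd l ⟶ ψ) := by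
  induction l with
  | nil => cases hψ
  | cons χ l ih =>
      have hχ := hl χ List.mem_cons_self
      have hl' := Form.wf_bigAnd.2 fun _ h => hl _ (.tail _ h)
      obtain rfl | hψ := List.mem_cons.1 hψ
      · exact taut₂ (imp (.and X0 X1) X0) (by decide) hχ hl'
      · exact imp_trans (taut₂ (imp (.and X0 X1) X1) (by decide) hχ hl')
          (ih (fun _ h => hl _ (.tail _ h)) hψ)

lemma imp_bigAnd {δ : Form A P} {l : List (Form A P)} (hδ : δ.WF)
    (h : ∀ χ ∈ l, Deriv (δ ⟶ χ)) : Deriv (δ ⟶ bigAnd l) := by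
  induction l with
  | nil => exact weaken hδ top
  | cons χ l ih =>
      exact imp_and_iff.2 ⟨h χ List.mem_cons_self, ih fun _ h' => h _ (.tail _ h')⟩

lemma imp_bigAnd_iff {δ : Form A P} {l : List (Form A P)} (hδ : δ.WF) (hl : ∀ χ ∈ l, χ.WF) :
    Deriv (δ ⟶ bigAnd l) ↔ ∀ χ ∈ l, Deriv (δ ⟶ χ) :=
  ⟨fun h _ hχ => imp_trans h (bigAnd_imp_of_mem hl hχ), imp_bigAnd hδ⟩

lemma imp_bigOr_of_mem {l : List (Form A P)} {ψ : Form A P} (hl : ∀ χ ∈ l, χ.WF)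
    (hψ : ψ ∈ l) : Deriv (ψ ⟶ bigOr l) := by
  induction l with
  | nil => cases hψ
  | cons χ l ih =>
      have hχ := hl χ List.mem_cons_self
      have hl' := Form.wf_bigOr.2 fun _ h => hl _ (.tail _ h)
      obtain rfl | hψ := List.mem_cons.1 hψ
      · exact taut₂ (imp X0 (or X0 X1)) (by decide) hχ hl'
      · exact imp_trans (ih (fun _ h => hl _ (.tail _ h)) hψ)
          (taut₂ (imp X1 (or X0 X1)) (by decide) hχ hl')

lemma bigOr_imp {l : List (Form A P)} {χ : Form A P} (hχ : χ.WF) (hl : ∀ ψ ∈ l, ψ.WF)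
    (h : ∀ ψ ∈ l, Deriv (ψ ⟶ χ)) : Deriv (bigOr l ⟶ χ) := by
  induction l with
  | nil => exact bot_imp hχ
  | cons ψ l ih =>
      exact mp₂ (taut₃ (imp (imp X0 X2) (imp (imp X1 X2) (imp (or X0 X1) X2))) (by decide)
        (hl ψ List.mem_cons_self) (Form.wf_bigOr.2 fun _ h => hl _ (.tail _ h)) hχ)
        (h ψ List.mem_cons_self)
        (ih (fun _ h' => hl _ (.tail _ h')) fun _ h' => h _ (.tail _ h'))

end Deriv

noncomputable def listAll {E : Type} (hE : Finite E) : List E :=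
  (@Finset.univ E (Fintype.ofFinite E)).toList

lemma mem_listAll {E : Type} (hE : Finite E) (x : E) : x ∈ listAll hE :=
  Finset.mem_toList.2 (@Finset.mem_univ E (Fintype.ofFinite E) x)

open Classical in
noncomputable def listWhere {E : Type} [hE : Finite E] (s : Set E) : List E :=
  (listAll hE).filter (· ∈ s)

@[simp] lemma mem_listWhere {E : Type} [Finite E] {s : Set E} {x : E} :
    x ∈ listWhere s ↔ x ∈ s := by
  simp [listWhere, mem_listAll]

namespace Deriv

open PropForm

lemma box_mono {a : A} {φ ψ : Form A P} (h : Deriv (φ ⟶ ψ)) :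
    Deriv (.box a φ ⟶ .box a ψ) := by
  obtain ⟨hφ, hψ⟩ := Form.wf_imp.1 h.wf
  exact (distBox a φ ψ hφ hψ).mp (necBox a h)

lemma cbox_mono {B : Set A} {φ ψ : Form A P} (h : Deriv (φ ⟶ ψ)) :
    Deriv (.cbox B φ ⟶ .cbox B ψ) := by
  obtain ⟨hφ, hψ⟩ := Form.wf_imp.1 h.wf
  exact (distCbox B φ ψ hφ hψ).mp (necCbox B h)

lemma updF_mono {U : Upd A P} {e : U.E} (hU : U.WF) {φ ψ : Form A P} (h : Deriv (φ ⟶ ψ)) :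
    Deriv (.updF U e φ ⟶ .updF U e ψ) := by
  obtain ⟨hφ, hψ⟩ := Form.wf_imp.1 h.wf
  exact (distUpd U e hU φ ψ hφ hψ).mp (necUpd U e hU h)

lemma box_mono₂ {a : A} {φ ψ χ : Form A P} (h : Deriv (φ ⟶ ψ ⟶ χ)) :
    Deriv (.box a φ ⟶ .box a ψ ⟶ .box a χ) := by
  obtain ⟨-, hψ, hχ⟩ : φ.WF ∧ ψ.WF ∧ χ.WF := by simpa using h.wf
  exact imp_trans (box_mono h) (distBox a ψ χ hψ hχ)

lemma imp_box_of_imp_box_imp {δ ρ ξ : Form A P} {a : A} (h : Deriv (δ ⟶ .box a (ρ ⟶ ξ)))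
    (hρ : Deriv ρ) : Deriv (δ ⟶ .box a ξ) := by
  obtain ⟨hδ, -, hξ⟩ : δ.WF ∧ ρ.WF ∧ ξ.WF := by simpa using h.wf
  exact imp_mp (imp_trans h (distBox a ρ ξ hρ.wf hξ)) (weaken hδ (necBox a hρ))

lemma imp_box_bigOr_imp {δ ξ : Form A P} {a : A} {l : List (Form A P)} (hδ : δ.WF)
    (hξ : ξ.WF) (hl : ∀ χ ∈ l, χ.WF) (h : ∀ χ ∈ l, Deriv (δ ⟶ .box a (χ ⟶ ξ))) :
    Deriv (δ ⟶ .box a (bigOr l ⟶ ξ)) := by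
  induction l with
  | nil => exact weaken hδ (necBox a (bot_imp hξ))
  | cons χ l ih =>
      have hl' : ∀ ψ ∈ l, ψ.WF := fun _ h => hl _ (.tail _ h)
      have hcases := box_mono₂ (a := a) <| taut₃
        (imp (imp X0 X2) (imp (imp X1 X2) (imp (or X0 X1) X2))) (by decide)
        (hl χ List.mem_cons_self) (Form.wf_bigOr.2 hl') hξ
      exact imp_mp (imp_trans (h χ List.mem_cons_self) hcases)
        (ih hl' fun _ h' => h _ (.tail _ h'))

lemma imp_updF_bot_iff {δ : Form A P} {U : Upd A P} (hU : U.WF) (e : U.E) :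
    Deriv (δ ⟶ .updF U e ⊥') ↔ Deriv (δ ⟶ ∼(U.pre e)) := by
  have htop : Deriv (.updF U e ⊤') := necUpd U e hU top
  have hpre := hU.pre e
  calc Deriv (δ ⟶ .updF U e ⊥') ↔ Deriv (δ ⟶ .updF U e (∼⊤')) :=
        imp_iff_of_imp_of_imp (updF_mono hU (taut₁ (imp .bot (.neg .top)) (by decide) hpre))
          (updF_mono hU (taut₁ (imp (.neg .top) .bot) (by decide) hpre))
    _ ↔ Deriv (δ ⟶ U.pre e ⟶ ∼(.updF U e ⊤')) := imp_iff_of_biImp (updNeg U e hU ⊤' trivial)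
    _ ↔ Deriv (δ ⟶ ∼(U.pre e)) :=
        imp_iff_of_imp_of_imp
          ((taut₂ (imp X1 (imp (imp X0 (.neg X1)) (.neg X0))) (by decide) hpre htop.wf).mp htop)
          (taut₂ (imp (.neg X0) (imp X0 (.neg X1))) (by decide) hpre htop.wf)

variable [Finite A]

lemma cbox_imp_and {B : Set A} {φ : Form A P} (hφ : φ.WF) :
    Deriv (.cbox B φ ⟶ φ ⋏ bigAnd ((listWhere B).map fun a => .box a (.cbox B φ))) :=
  mix B _ (fun _ => mem_listWhere) φ hφ

lemma cbox_imp_self {B : Set A} {φ : Form A P} (hφ : φ.WF) : Deriv (.cbox B φ ⟶ φ) :=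
  (imp_and_iff.1 (cbox_imp_and hφ)).1

lemma cbox_imp_box_cbox {B : Set A} {a : A} (ha : a ∈ B) {φ : Form A P} (hφ : φ.WF) :
    Deriv (.cbox B φ ⟶ .box a (.cbox B φ)) :=
  imp_trans (imp_and_iff.1 (cbox_imp_and hφ)).2 <|
    bigAnd_imp_of_mem (by simpa using fun _ _ => hφ) (List.mem_map.2 ⟨a, mem_listWhere.2 ha, rfl⟩)

lemma imp_cbox_of_imp_box {B : Set A} {χ φ : Form A P} (hφ : Deriv (χ ⟶ φ))
    (hbox : ∀ a ∈ B, Deriv (χ ⟶ .box a χ)) : Deriv (χ ⟶ .cbox B φ) := by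
  obtain ⟨hχ, -⟩ := Form.wf_imp.1 hφ.wf
  have hstep : Deriv (χ ⟶ bigAnd ((listWhere B).map fun a => .box a χ)) :=
    imp_bigAnd hχ (by simpa using hbox)
  exact imp_trans ((induc B _ (fun _ => mem_listWhere) χ hχ).mp (necCbox B hstep))
    (cbox_mono hφ)

lemma updF_cbox_and_pre_imp_box {U : Upd A P} (hU : U.WF) {B : Set A} {a : A} (ha : a ∈ B)
    {f g : U.E} (hfg : U.rel a f g) {φ : Form A P} (hφ : φ.WF) :
    Deriv (.updF U f (.cbox B φ) ⋏ U.pre f ⟶ .box a (.updF U g (.cbox B φ))) := by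
  have : Finite U.E := hU.2.1
  have hred := updBox U f hU a (.cbox B φ) hφ (listWhere {g | U.rel a f g})
    (fun _ => mem_listWhere)
  exact imp_trans (uncurry (imp_trans (updF_mono hU (cbox_imp_box_cbox ha hφ)) hred.biImp_mp))
    (bigAnd_imp_of_mem (by simpa using fun g _ => hU.updF g (Form.wf_cbox.2 hφ))
      (List.mem_map.2 ⟨g, mem_listWhere.2 hfg, rfl⟩))

end Deriv

/-! ### Complexity and closure -/

namespace Form

/-- The factor `U.complexity + 2` in front of `φ.complexity` makes every reduction axiom
decrease the complexity; for the composition axiom this is the inequality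
`(U;U').complexity + 2 < (U.complexity + 2) * (U'.complexity + 2)`. -/
noncomputable def complexity : Form A P → ℕ
  | .atom _ | .top | .bot => 1
  | .neg φ | .box _ φ | .cbox _ φ => 1 + φ.complexity
  | .and φ ψ => 1 + φ.complexity + ψ.complexity
  | .upd E _ pre post _ φ =>
      (sSup {x | ∃ f : E, x = (pre f).complexity +
        sSup {y | ∃ p, y = (post f p).complexity}} + 2) * φ.complexity

end Form

namespace Upd

noncomputable def postComplexity (U : Upd A P) (f : U.E) : ℕ :=
  sSup {y | ∃ p, y = (U.post f p).complexity}

noncomputable def complexity (U : Upd A P) : ℕ :=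
  sSup {x | ∃ f : U.E, x = (U.pre f).complexity + U.postComplexity f}

lemma complexity_post_le {U : Upd A P} (hU : U.WF) (f : U.E) (p : P) :
    (U.post f p).complexity ≤ U.postComplexity f := by
  refine le_csSup (((hU.2.2.2.2 f).image fun q => (U.post f q).complexity).insert 1
    |>.subset ?_).bddAbove ⟨p, rfl⟩
  rintro y ⟨q, rfl⟩
  by_cases hq : U.post f q = .atom q
  · exact .inl (by rw [hq]; rfl)
  · exact .inr ⟨q, hq, rfl⟩

lemma pre_add_postComplexity_le {U : Upd A P} (hU : U.WF) (f : U.E) :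
    (U.pre f).complexity + U.postComplexity f ≤ U.complexity :=
  have : Finite U.E := hU.2.1
  le_csSup ((Set.finite_range fun f => (U.pre f).complexity + U.postComplexity f).subset
    (by rintro _ ⟨f, rfl⟩; exact ⟨f, rfl⟩)).bddAbove ⟨f, rfl⟩

lemma complexity_comp_le {U U' : Upd A P} (hU : U.WF) (hU' : U'.WF) :
    (U.comp U').complexity ≤ 1 + U.complexity + (U.complexity + 2) * U'.complexity := by
  refine csSup_le' ?_
  rintro _ ⟨x, rfl⟩
  have hpost : (U.comp U').postComplexity x ≤
      U.postComplexity x.1 + (U.complexity + 2) * U'.postComplexity x.2 := by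
    refine csSup_le' ?_
    rintro _ ⟨p, rfl⟩
    rw [comp_post]
    split
    · exact (complexity_post_le hU x.1 p).trans (Nat.le_add_right _ _)
    · exact (Nat.mul_le_mul_left _ (complexity_post_le hU' x.2 p)).trans
        (Nat.le_add_left _ _)
  have h₁ := pre_add_postComplexity_le hU x.1
  have h₂ := Nat.mul_le_mul_left (U.complexity + 2) (pre_add_postComplexity_le hU' x.2)
  rw [comp_pre]
  change 1 + (U.pre x.1).complexity + (U.complexity + 2) * (U'.pre x.2).complexity + _ ≤ _
  nlinarith

end Upd

namespace Form

lemma complexity_updF {U : Upd A P} {e : U.E} {φ : Form A P} :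
    (updF U e φ).complexity = (U.complexity + 2) * φ.complexity :=
  rfl

lemma one_le_complexity (φ : Form A P) : 1 ≤ φ.complexity := by
  induction φ with
  | atom | top | bot => exact le_rfl
  | neg | box | cbox | and => simp only [complexity]; omega
  | upd _ _ _ _ _ _ _ _ ih => exact ih.trans (Nat.le_mul_of_pos_left _ (by omega))

lemma complexity_pre_lt {U : Upd A P} (hU : U.WF) (e f : U.E) (φ : Form A P) :
    (U.pre f).complexity < (updF U e φ).complexity := by
  have := U.pre_add_postComplexity_le hU f
  rw [complexity_updF]
  nlinarith [φ.one_le_complexity]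

lemma complexity_post_lt {U : Upd A P} (hU : U.WF) (e f : U.E) (p : P) (φ : Form A P) :
    (U.post f p).complexity < (updF U e φ).complexity := by
  have := U.complexity_post_le hU f p
  have := U.pre_add_postComplexity_le hU f
  rw [complexity_updF]
  nlinarith [φ.one_le_complexity]

lemma complexity_updF_lt_updF {U : Upd A P} (e f : U.E) {φ ψ : Form A P}
    (h : φ.complexity < ψ.complexity) :
    (updF U f φ).complexity < (updF U e ψ).complexity := by
  simp only [complexity_updF]
  exact Nat.mul_lt_mul_of_pos_left h (by omega)

lemma complexity_box_updF_lt {U : Upd A P} (e f : U.E) (a : A) (φ : Form A P) :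
    (box a (updF U f φ)).complexity < (updF U e (box a φ)).complexity := by
  simp only [complexity, complexity_updF]
  nlinarith

lemma complexity_updF_comp_lt {U U' : Upd A P} (hU : U.WF) (hU' : U'.WF) (e : U.E) (e' : U'.E)
    (φ : Form A P) :
    (updF (U.comp U') (e, e') φ).complexity < (updF U e (updF U' e' φ)).complexity := by
  change ((U.comp U').complexity + 2) * φ.complexity <
    (U.complexity + 2) * ((U'.complexity + 2) * φ.complexity)
  rw [← Nat.mul_assoc]
  have := Upd.complexity_comp_le hU hU'
  exact Nat.mul_lt_mul_of_pos_right (by nlinarith) φ.one_le_complexity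

variable [hA : Finite A]

/-- The formulas `[a][B*]φ`, and `[U,f][B*]φ`, `[a][U,f][B*]φ` for all events `f`, are added
without recursing into them: their closures would contain the formula being closed, and the
closure of `[U,e][B*]φ` is the same for every `e`. -/
noncomputable def closure : (φ : Form A P) → φ.WF → List (Form A P)
  | .atom p, _ => [.atom p]
  | .top, _ => [.top]
  | .bot, _ => [.bot]
  | .neg φ, h => .neg φ :: φ.closure (wf_neg.1 h)
  | .and φ ψ, h => .and φ ψ :: (φ.closure (wf_and.1 h).1 ++ ψ.closure (wf_and.1 h).2)
  | .box a φ, h => .box a φ :: φ.closure (wf_box.1 h)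
  | .cbox B φ, h =>
      .cbox B φ :: ((listAll hA).map (box · (.cbox B φ)) ++ φ.closure (wf_cbox.1 h))
  | .upd E rel pre post e (.atom p), h =>
      .upd E rel pre post e (.atom p) ::
        ((pre e).closure (h.upd_model.pre e) ++ (post e p).closure (h.upd_model.post e p))
  | .upd E rel pre post e .top, h =>
      .upd E rel pre post e .top :: (pre e).closure (h.upd_model.pre e)
  | .upd E rel pre post e .bot, h =>
      .upd E rel pre post e .bot :: (pre e).closure (h.upd_model.pre e)
  | .upd E rel pre post e (.neg φ), h =>
      .upd E rel pre post e (.neg φ) ::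
        ((pre e).closure (h.upd_model.pre e) ++
          (upd E rel pre post e φ).closure (h.upd_of_upd e (wf_neg.1 h.upd_body)))
  | .upd E rel pre post e (.and φ ψ), h =>
      .upd E rel pre post e (.and φ ψ) ::
        ((upd E rel pre post e φ).closure (h.upd_of_upd e (wf_and.1 h.upd_body).1) ++
          (upd E rel pre post e ψ).closure (h.upd_of_upd e (wf_and.1 h.upd_body).2))
  | .upd E rel pre post e (.box a φ), h =>
      .upd E rel pre post e (.box a φ) ::
        ((pre e).closure (h.upd_model.pre e) ++ (listAll h.upd_model.2.1).flatMap fun f =>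
          (box a (upd E rel pre post f φ)).closure
            (wf_box.2 (h.upd_of_upd f (wf_box.1 h.upd_body))))
  | .upd E rel pre post e (.cbox B φ), h =>
      (listAll h.upd_model.2.1).flatMap fun f =>
        upd E rel pre post f (.cbox B φ) ::
          ((listAll hA).map (box · (upd E rel pre post f (.cbox B φ))) ++
            ((pre f).closure (h.upd_model.pre f) ++
              (upd E rel pre post f φ).closure (h.upd_of_upd f (wf_cbox.1 h.upd_body))))
  | .upd E rel pre post e (.upd E' rel' pre' post' e' φ), h =>
      .upd E rel pre post e (.upd E' rel' pre' post' e' φ) ::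
        (updF ((Upd.mk E rel pre post).comp ⟨E', rel', pre', post'⟩) (e, e') φ).closure
          ((h.upd_model.comp h.upd_body.upd_model).updF (e, e') h.upd_body.upd_body)
termination_by φ => φ.complexity
decreasing_by
  all_goals first
    | simp only [complexity]; omega
    | exact complexity_pre_lt h.upd_model _ _ _
    | exact complexity_post_lt h.upd_model _ _ _ _
    | exact complexity_box_updF_lt (U := ⟨E, rel, pre, post⟩) _ _ _ _
    | exact complexity_updF_lt_updF (U := ⟨E, rel, pre, post⟩) _ _
        (by simp only [complexity]; omega)
    | exact complexity_updF_comp_lt h.upd_model h.upd_body.upd_model _ _ _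

lemma mem_closure_self (φ : Form A P) (h : φ.WF) : φ ∈ φ.closure h := by
  induction φ, h using closure.induct <;> simp [closure, mem_listAll]

lemma wf_of_mem_closure {φ ψ : Form A P} {h : φ.WF} (hψ : ψ ∈ φ.closure h) : ψ.WF := by
  induction φ, h using closure.induct generalizing ψ <;> rw [closure] at hψ <;> aesop

lemma mem_closure_of_mem_closure {φ ψ χ : Form A P} {h : φ.WF} {hψ' : ψ.WF}
    (hψ : ψ ∈ φ.closure h) (hχ : χ ∈ ψ.closure hψ') : χ ∈ φ.closure h := by
  induction φ, h using closure.induct generalizing ψ with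
  | case7 B φ h _ ih =>
    rw [closure] at hψ
    obtain rfl | hψ := List.mem_cons.1 hψ
    · exact hχ
    obtain ⟨a, -, rfl⟩ | hψ := List.mem_append.1 hψ |>.imp_left List.mem_map.1
    · rw [closure] at hχ
      obtain rfl | hχ := List.mem_cons.1 hχ
      · simp [closure, mem_listAll]
      · exact hχ
    · rw [closure]
      exact .tail _ (List.mem_append_right _ (ih hψ hχ))
  | case14 E rel pre post e B φ h _ ih₁ ih₂ =>
    have hcl : ∀ f (hf : (upd E rel pre post f (cbox B φ)).WF),
        (upd E rel pre post f (cbox B φ)).closure hf =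
          (upd E rel pre post e (cbox B φ)).closure h := fun f hf => by simp only [closure]
    rw [closure] at hψ
    obtain ⟨f, -, hψ⟩ := List.mem_flatMap.1 hψ
    obtain rfl | hψ := List.mem_cons.1 hψ
    · rwa [hcl] at hχ
    obtain ⟨a, -, rfl⟩ | hψ := List.mem_append.1 hψ |>.imp_left List.mem_map.1
    · rw [closure] at hχ
      obtain rfl | hχ := List.mem_cons.1 hχ
      · rw [closure]
        exact List.mem_flatMap.2 ⟨f, mem_listAll _ f, by simp [mem_listAll]⟩
      · rwa [hcl f hψ'] at hχ
    · rw [closure]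
      refine List.mem_flatMap.2 ⟨f, mem_listAll _ f, .tail _ (List.mem_append_right _ ?_)⟩
      rcases List.mem_append.1 hψ with hψ | hψ
      · exact List.mem_append_left _ (ih₁ f hψ hχ)
      · exact List.mem_append_right _ (ih₂ f hψ hχ)
  | _ =>
    rw [closure] at hψ
    obtain rfl | hψ := List.mem_cons.1 hψ
    · exact hχ
    · rw [closure]
      exact List.mem_cons_of_mem _ (by aesop)

structure Closed (L : List (Form A P)) : Prop where
  wf : ∀ ψ ∈ L, ψ.WF
  mem_of_mem_closure {ψ χ : Form A P} (hψ : ψ ∈ L) : χ ∈ ψ.closure (wf ψ hψ) → χ ∈ L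

lemma closed_closure (φ : Form A P) (h : φ.WF) : Closed (φ.closure h) :=
  ⟨fun _ => wf_of_mem_closure, fun hψ hχ => mem_closure_of_mem_closure hψ hχ⟩

end Form

/-! ### Semantics of updates -/

section Semantics

variable {M : Model A P} {s : M.S}

@[simp] lemma sat_neg {φ : Form A P} : sat (∼φ) M s ↔ ¬ sat φ M s := Iff.rfl

@[simp] lemma sat_and {φ ψ : Form A P} : sat (φ ⋏ ψ) M s ↔ sat φ M s ∧ sat ψ M s := Iff.rfl

@[simp] lemma sat_box {a : A} {φ : Form A P} :
    sat (.box a φ) M s ↔ ∀ t, M.R a s t → sat φ M t := Iff.rfl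

@[simp] lemma sat_cbox {B : Set A} {φ : Form A P} :
    sat (.cbox B φ) M s ↔
      ∀ t, Relation.ReflTransGen (fun x y => ∃ a ∈ B, M.R a x y) s t → sat φ M t := Iff.rfl

lemma sat_updF_atom {U : Upd A P} {e : U.E} {p : P} :
    sat (.updF U e (.atom p)) M s ↔ (sat (U.pre e) M s → sat (U.post e p) M s) :=
  Iff.rfl

lemma sat_updF_bot {U : Upd A P} {e : U.E} :
    sat (.updF U e ⊥') M s ↔ ¬ sat (U.pre e) M s :=
  Iff.rfl

lemma sat_updF_neg {U : Upd A P} {e : U.E} {φ : Form A P} :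
    sat (.updF U e (∼φ)) M s ↔ (sat (U.pre e) M s → ¬ sat (.updF U e φ) M s) :=
  ⟨fun h hpre hφ => h hpre (hφ hpre), fun h hpre hφ => h hpre fun _ => hφ⟩

lemma sat_updF_and {U : Upd A P} {e : U.E} {φ ψ : Form A P} :
    sat (.updF U e (φ ⋏ ψ)) M s ↔ sat (.updF U e φ) M s ∧ sat (.updF U e ψ) M s :=
  forall_and

lemma sat_updF_box {U : Upd A P} {e : U.E} {a : A} {φ : Form A P} :
    sat (.updF U e (.box a φ)) M s ↔
      (sat (U.pre e) M s → ∀ f, U.rel a e f → sat (.box a (.updF U f φ)) M s) :=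
  ⟨fun h hpre f hf t hst hpre' => h hpre ⟨(t, f), hpre'⟩ ⟨hst, hf⟩,
    fun h hpre y hy => h hpre y.1.2 hy.2 y.1.1 hy.1 y.2⟩

end Semantics

namespace Model

structure Iso (M N : Model A P) where
  equiv : M.S ≃ N.S
  rel_iff (a : A) (s t : M.S) : M.R a s t ↔ N.R a (equiv s) (equiv t)
  val_iff (p : P) (s : M.S) : M.V p s ↔ N.V p (equiv s)

namespace Iso

variable {M N : Model A P}

lemma reachable_iff (I : M.Iso N) (B : Set A) (s t : M.S) :
    Relation.ReflTransGen (fun x y => ∃ a ∈ B, M.R a x y) s t ↔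
      Relation.ReflTransGen (fun x y => ∃ a ∈ B, N.R a x y) (I.equiv s) (I.equiv t) := by
  constructor
  · refine Relation.ReflTransGen.lift I.equiv ?_ s t
    rintro x y ⟨a, ha, hxy⟩
    exact ⟨a, ha, (I.rel_iff a x y).1 hxy⟩
  · intro h
    have hlift := Relation.ReflTransGen.lift I.equiv.symm
      (p := fun x y => ∃ a ∈ B, M.R a x y) (fun x y ⟨a, ha, hxy⟩ =>
        ⟨a, ha, (I.rel_iff a _ _).2 (by simpa using hxy)⟩) _ _ h
    simpa [Function.onFun] using hlift

def prodM (I : M.Iso N) (E : Type) (rel : A → E → E → Prop) {preM : E → M.S → Prop}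
    {postM : E → M.S → P → Prop} {preN : E → N.S → Prop} {postN : E → N.S → P → Prop}
    (hpre : ∀ f s, preM f s ↔ preN f (I.equiv s))
    (hpost : ∀ f s p, postM f s p ↔ postN f (I.equiv s) p) :
    (prodM M E rel preM postM).Iso (prodM N E rel preN postN) where
  equiv := (I.equiv.prodCongr (.refl E)).subtypeEquiv fun x => hpre x.2 x.1
  rel_iff a _ _ := and_congr_left' (I.rel_iff a _ _)
  val_iff p x := hpost x.1.2 x.1.1 p

lemma sat_iff {φ : Form A P} (I : M.Iso N) (s : M.S) : sat φ M s ↔ sat φ N (I.equiv s) := by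
  induction φ generalizing M N with
  | atom p => exact I.val_iff p s
  | top | bot => exact Iff.rfl
  | neg φ ih => exact (ih I s).not
  | and φ ψ ih₁ ih₂ => exact and_congr (ih₁ I s) (ih₂ I s)
  | box a φ ih =>
      simp only [sat_box]
      exact I.equiv.forall_congr fun t => by rw [I.rel_iff, ih I t]
  | cbox B φ ih =>
      simp only [sat_cbox]
      exact I.equiv.forall_congr fun t => by rw [I.reachable_iff, ih I t]
  | upd E rel pre post e φ ihpre ihpost ih =>
      let I' := I.prodM E rel (preM := fun f t => sat (pre f) M t)
        (postM := fun f t p => sat (post f p) M t) (preN := fun f t => sat (pre f) N t)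
        (postN := fun f t p => sat (post f p) N t) (fun f t => ihpre f I t)
        (fun f t p => ihpost f p I t)
      exact ⟨fun h hpre => (ih I' ⟨(s, e), (ihpre e I s).2 hpre⟩).1 (h _),
        fun h hpre => (ih I' ⟨(s, e), hpre⟩).2 (h _)⟩

end Iso

def compIso (M : Model A P) (U U' : Upd A P) :
    (M.prodUpd (U.comp U')).Iso ((M.prodUpd U).prodUpd U') where
  equiv :=
    { toFun x := ⟨(⟨(x.1.1, x.1.2.1), x.2.1⟩, x.1.2.2), x.2.2 x.2.1⟩
      invFun y := ⟨(y.1.1.1.1, (y.1.1.1.2, y.1.2)), ⟨y.1.1.2, fun _ => y.2⟩⟩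
      left_inv _ := rfl
      right_inv _ := rfl }
  rel_iff _ _ _ := and_assoc.symm
  val_iff p x := by
    change sat ((U.comp U').post x.1.2 p) M x.1.1 ↔ sat (U'.post x.1.2.2 p) (M.prodUpd U) _
    rw [Upd.comp_post]
    split
    · next h => rw [h]; exact Iff.rfl
    · exact ⟨fun h => h x.2.1, fun h _ => h⟩

end Model

lemma sat_updF_updF {M : Model A P} {s : M.S} {U U' : Upd A P} {e : U.E} {e' : U'.E}
    {φ : Form A P} :
    sat (.updF U e (.updF U' e' φ)) M s ↔ sat (.updF (U.comp U') (e, e') φ) M s :=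
  ⟨fun h hpre => ((M.compIso U U').sat_iff _).2 (h hpre.1 (hpre.2 hpre.1)),
    fun h hpre hpre' => ((M.compIso U U').sat_iff ⟨(s, (e, e')), hpre, fun _ => hpre'⟩).1 (h _)⟩

/-! ### The canonical model -/

namespace PropForm

def bigAnd {n : ℕ} (l : List (PropForm n)) : PropForm n := l.foldr .and .top

def bigOr {n : ℕ} (l : List (PropForm n)) : PropForm n := l.foldr or .bot

def lit {n : ℕ} (v : Fin n → Bool) (i : Fin n) : PropForm n :=
  bif v i then var i else neg (var i)

def desc {n : ℕ} (v : Fin n → Bool) : PropForm n := bigAnd ((List.finRange n).map (lit v))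

lemma eval_bigAnd {n : ℕ} (w : Fin n → Bool) (l : List (PropForm n)) :
    (bigAnd l).eval w = l.all (eval w) := by
  induction l <;> simp_all [bigAnd, eval]

lemma eval_bigOr {n : ℕ} (w : Fin n → Bool) (l : List (PropForm n)) :
    (bigOr l).eval w = l.any (eval w) := by
  induction l <;> simp_all [bigOr, or, eval]

lemma eval_desc {n : ℕ} {v w : Fin n → Bool} : (desc v).eval w = true ↔ v = w := by
  simp only [desc, eval_bigAnd, List.all_map, List.all_eq_true, List.mem_finRange,
    Function.comp_apply, true_implies, funext_iff]
  refine forall_congr' fun i => ?_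
  cases hv : v i <;> cases hw : w i <;> simp [lit, eval, hv, hw]

lemma taut_bigOr_desc {n : ℕ} {vs : List (Fin n → Bool)} (hvs : ∀ v, v ∈ vs) :
    (bigOr (vs.map desc)).Taut := fun w => by
  simpa [eval_bigOr] using ⟨w, hvs w, eval_desc.2 rfl⟩

lemma taut_desc_imp_lit {n : ℕ} (v : Fin n → Bool) (i : Fin n) :
    (imp (desc v) (lit v i)).Taut := fun w => by
  cases h : (desc v).eval w
  · simp [imp, eval, h]
  · obtain rfl := eval_desc.1 h
    cases hv : v i <;> simp [imp, eval, lit, hv]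

lemma subst_bigOr {n : ℕ} (σ : Fin n → Form A P) (l : List (PropForm n)) :
    (bigOr l).subst σ = _root_.bigOr (l.map (subst σ)) := by
  induction l <;> simp_all [bigOr, _root_.bigOr, subst, or, Form.or]

lemma subst_lit {n : ℕ} (σ : Fin n → Form A P) (v : Fin n → Bool) (i : Fin n) :
    (lit v i).subst σ = if v i then σ i else ∼(σ i) := by
  cases h : v i <;> simp [lit, subst, h]

end PropForm

def Form.Consistent (δ : Form A P) : Prop := ¬ Deriv (δ ⟶ ⊥')

namespace Canonical

open PropForm (X0 X1 X2 imp)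

def State (L : List (Form A P)) : Type :=
  {v : Fin L.length → Bool // Form.Consistent ((PropForm.desc v).subst L.get)}

instance (L : List (Form A P)) : Finite (State L) := Subtype.finite

variable {L : List (Form A P)}

def State.desc (x : State L) : Form A P := (PropForm.desc x.1).subst L.get

lemma wf_subst_desc (hwf : ∀ ψ ∈ L, ψ.WF) (v : Fin L.length → Bool) :
    ((PropForm.desc v).subst L.get).WF :=
  PropForm.wf_subst (fun i => hwf _ (L.get_mem i)) _

lemma State.wf_desc (hwf : ∀ ψ ∈ L, ψ.WF) (x : State L) : x.desc.WF :=
  wf_subst_desc hwf x.1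

lemma State.decides (hwf : ∀ ψ ∈ L, ψ.WF) (x : State L) {ψ : Form A P} (hψ : ψ ∈ L) :
    Deriv (x.desc ⟶ ψ) ∨ Deriv (x.desc ⟶ ∼ψ) := by
  obtain ⟨i, rfl⟩ := List.mem_iff_get.1 hψ
  have h : Deriv (x.desc ⟶ (PropForm.lit x.1 i).subst L.get) :=
    .taut _ _ (PropForm.taut_desc_imp_lit x.1 i) fun j => hwf _ (L.get_mem j)
  rw [PropForm.subst_lit] at h
  cases hv : x.1 i
  · exact .inr (by simpa [hv] using h)
  · exact .inl (by simpa [hv] using h)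

lemma State.imp_neg_iff (hwf : ∀ ψ ∈ L, ψ.WF) (x : State L) {ψ : Form A P} (hψ : ψ ∈ L) :
    Deriv (x.desc ⟶ ∼ψ) ↔ ¬ Deriv (x.desc ⟶ ψ) :=
  ⟨fun hn hp => x.2 (Deriv.imp_bot_of_imp_of_imp_neg hp hn), (x.decides hwf hψ).resolve_left⟩

lemma State.imp_imp_iff (hwf : ∀ ψ ∈ L, ψ.WF) (x : State L) {ψ χ : Form A P} (hψ : ψ ∈ L)
    (hχ : χ.WF) : Deriv (x.desc ⟶ ψ ⟶ χ) ↔ (Deriv (x.desc ⟶ ψ) → Deriv (x.desc ⟶ χ)) := by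
  refine ⟨Deriv.imp_mp, fun h => ?_⟩
  rcases x.decides hwf hψ with hp | hn
  · exact (Deriv.taut₃ (imp (imp X0 X2) (imp X0 (imp X1 X2))) (by decide)
      (x.wf_desc hwf) (hwf ψ hψ) hχ).mp (h hp)
  · exact (Deriv.taut₃ (imp (imp X0 (.neg X1)) (imp X0 (imp X1 X2))) (by decide)
      (x.wf_desc hwf) (hwf ψ hψ) hχ).mp hn

lemma deriv_of_forall_imp (hwf : ∀ ψ ∈ L, ψ.WF) {φ : Form A P} (hφ : φ.WF)
    (h : ∀ x : State L, Deriv (x.desc ⟶ φ)) : Deriv φ := by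
  have hall := Deriv.taut _ L.get (PropForm.taut_bigOr_desc (mem_listAll inferInstance))
    fun j => hwf _ (L.get_mem j)
  rw [PropForm.subst_bigOr, List.map_map] at hall
  refine (Deriv.bigOr_imp hφ (by simpa using fun v _ => wf_subst_desc hwf v) ?_).mp hall
  simp only [List.mem_map]
  rintro _ ⟨v, -, rfl⟩
  by_cases hv : Form.Consistent ((PropForm.desc v).subst L.get)
  · exact h ⟨v, hv⟩
  · exact Deriv.imp_trans (not_not.1 hv) (Deriv.bot_imp hφ)

noncomputable def charForm (S : Set (State L)) : Form A P :=
  bigOr ((listWhere S).map State.desc)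

lemma wf_charForm (hwf : ∀ ψ ∈ L, ψ.WF) (S : Set (State L)) : (charForm S).WF := by
  simpa [charForm] using fun x _ => x.wf_desc hwf

lemma State.imp_charForm (hwf : ∀ ψ ∈ L, ψ.WF) {S : Set (State L)} {x : State L} (hx : x ∈ S) :
    Deriv (x.desc ⟶ charForm S) :=
  Deriv.imp_bigOr_of_mem (by simpa using fun y _ => y.wf_desc hwf)
    (List.mem_map.2 ⟨x, mem_listWhere.2 hx, rfl⟩)

lemma charForm_imp (hwf : ∀ ψ ∈ L, ψ.WF) {S : Set (State L)} {ψ : Form A P} (hψ : ψ.WF)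
    (h : ∀ x ∈ S, Deriv (x.desc ⟶ ψ)) : Deriv (charForm S ⟶ ψ) :=
  Deriv.bigOr_imp hψ (by simpa using fun y _ => y.wf_desc hwf) (by simpa using h)

def model (L : List (Form A P)) : Model A P where
  S := State L
  R a x y := ∀ ψ, .box a ψ ∈ L → Deriv (x.desc ⟶ .box a ψ) → Deriv (y.desc ⟶ ψ)
  V p x := Deriv (x.desc ⟶ .atom p)

lemma State.imp_box (hwf : ∀ ψ ∈ L, ψ.WF) (hbox : ∀ a ψ, .box a ψ ∈ L → ψ ∈ L) (x : State L)
    {a : A} {ξ : Form A P} (hξ : ξ.WF) (h : ∀ y, (model L).R a x y → Deriv (y.desc ⟶ ξ)) :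
    Deriv (x.desc ⟶ .box a ξ) := by
  have hstep : ∀ y : State L, Deriv (x.desc ⟶ .box a (y.desc ⟶ ξ)) := by
    intro y
    by_cases hR : (model L).R a x y
    · exact Deriv.weaken (x.wf_desc hwf) (.necBox a (h y hR))
    obtain ⟨ψ, hψL, hxψ, hyψ⟩ : ∃ ψ, .box a ψ ∈ L ∧ Deriv (x.desc ⟶ .box a ψ) ∧
        ¬ Deriv (y.desc ⟶ ψ) := by
      simpa [model] using hR
    have hy := (y.imp_neg_iff hwf (hbox a ψ hψL)).2 hyψ
    exact Deriv.imp_trans hxψ <| Deriv.box_mono <|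
      (Deriv.taut₃ (imp (imp X0 (.neg X1)) (imp X1 (imp X0 X2))) (by decide)
        (y.wf_desc hwf) (hwf _ (hbox a ψ hψL)) hξ).mp hy
  have hall : Deriv (charForm (Set.univ : Set (State L))) :=
    deriv_of_forall_imp hwf (wf_charForm hwf _) fun y => y.imp_charForm hwf (Set.mem_univ y)
  exact Deriv.imp_box_of_imp_box_imp (Deriv.imp_box_bigOr_imp (x.wf_desc hwf) hξ
    (by simpa using fun y : State L => y.wf_desc hwf) (by simpa using hstep)) hall

/-! ### The truth lemma -/

open Form (Closed)

def Truth (L : List (Form A P)) (ψ : Form A P) : Prop :=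
  ∀ x : (model L).S, sat ψ (model L) x ↔ Deriv (x.desc ⟶ ψ)

def TruthBelow (L : List (Form A P)) (n : ℕ) : Prop :=
  ∀ ψ ∈ L, ψ.complexity < n → Truth L ψ

lemma truth_atom (p : P) : Truth L (.atom p) := fun _ => Iff.rfl

lemma truth_bot : Truth L ⊥' := fun x => ⟨False.elim, x.2⟩

variable [Finite A]

lemma _root_.Form.Closed.mem_of_box_mem (hL : Closed L) {a : A} {ψ : Form A P}
    (h : .box a ψ ∈ L) : ψ ∈ L :=
  hL.mem_of_mem_closure h (by simp [Form.closure, Form.mem_closure_self])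

lemma truth_top (hL : Closed L) : Truth L ⊤' :=
  fun x => ⟨fun _ => Deriv.weaken (x.wf_desc hL.wf) Deriv.top, fun _ => trivial⟩

lemma truth_neg (hL : Closed L) {φ : Form A P} (h : ∼φ ∈ L)
    (ih : TruthBelow L (∼φ).complexity) : Truth L (∼φ) := fun x => by
  have hφ : φ ∈ L := hL.mem_of_mem_closure h (by simp [Form.closure, Form.mem_closure_self])
  rw [sat_neg, ih φ hφ (by simp only [Form.complexity]; omega) x, x.imp_neg_iff hL.wf hφ]

lemma truth_and (hL : Closed L) {φ ψ : Form A P} (h : φ ⋏ ψ ∈ L)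
    (ih : TruthBelow L (φ ⋏ ψ).complexity) : Truth L (φ ⋏ ψ) := fun x => by
  have hφ : φ ∈ L := hL.mem_of_mem_closure h (by simp [Form.closure, Form.mem_closure_self])
  have hψ : ψ ∈ L := hL.mem_of_mem_closure h (by simp [Form.closure, Form.mem_closure_self])
  rw [sat_and, ih φ hφ (by simp only [Form.complexity]; omega) x,
    ih ψ hψ (by simp only [Form.complexity]; omega) x, Deriv.imp_and_iff]

lemma truth_box (hL : Closed L) {a : A} {φ : Form A P} (h : .box a φ ∈ L)
    (ih : TruthBelow L (Form.box a φ).complexity) : Truth L (.box a φ) := fun x => by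
  have hφ := hL.mem_of_box_mem h
  have ihφ := ih φ hφ (by simp only [Form.complexity]; omega)
  exact ⟨fun hsat => x.imp_box hL.wf (fun _ _ => hL.mem_of_box_mem) (hL.wf φ hφ)
      fun y hy => (ihφ y).1 (hsat y hy),
    fun hx y hy => (ihφ y).2 (hy φ h hx)⟩

lemma truth_cbox (hL : Closed L) {B : Set A} {φ : Form A P} (h : .cbox B φ ∈ L)
    (ih : TruthBelow L (Form.cbox B φ).complexity) : Truth L (.cbox B φ) := fun x => by
  have hφL : φ ∈ L := hL.mem_of_mem_closure h (by simp [Form.closure, Form.mem_closure_self])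
  have hboxL : ∀ a, .box a (.cbox B φ) ∈ L := fun a =>
    hL.mem_of_mem_closure h (by simp [Form.closure, mem_listAll])
  have ihφ := ih φ hφL (by simp only [Form.complexity]; omega)
  have hφ := hL.wf φ hφL
  constructor
  · intro hsat
    let S : Set (State L) := {y | sat (.cbox B φ) (model L) y}
    have himp : Deriv (charForm S ⟶ φ) :=
      charForm_imp hL.wf hφ fun y hy => (ihφ y).1 (hy y .refl)
    have hinv : ∀ a ∈ B, Deriv (charForm S ⟶ .box a (charForm S)) := fun a ha =>
      charForm_imp hL.wf (wf_charForm hL.wf S) fun y hy =>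
        y.imp_box hL.wf (fun _ _ => hL.mem_of_box_mem) (wf_charForm hL.wf S) fun z hz =>
          z.imp_charForm hL.wf fun t ht => hy t (.head ⟨a, ha, hz⟩ ht)
    exact Deriv.imp_trans (x.imp_charForm hL.wf hsat) (Deriv.imp_cbox_of_imp_box himp hinv)
  · intro hx y hxy
    have hy : Deriv (y.desc ⟶ .cbox B φ) := by
      induction hxy with
      | refl => exact hx
      | tail _ hyz ihy =>
          obtain ⟨a, ha, hR⟩ := hyz
          exact hR _ (hboxL a) (Deriv.imp_trans ihy (Deriv.cbox_imp_box_cbox ha hφ))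
    exact (ihφ y).2 (Deriv.imp_trans hy (Deriv.cbox_imp_self hφ))

section Updates

variable {U : Upd A P} {e : U.E}

lemma truth_updF_atom (hL : Closed L) {p : P} (h : .updF U e (.atom p) ∈ L)
    (ih : TruthBelow L (Form.updF U e (.atom p)).complexity) :
    Truth L (.updF U e (.atom p)) := fun x => by
  have hU := (Form.wf_updF_iff.1 (hL.wf _ h)).1
  have hpre : U.pre e ∈ L :=
    hL.mem_of_mem_closure h (by simp [Form.updF, Form.closure, Form.mem_closure_self])
  have hpost : U.post e p ∈ L :=
    hL.mem_of_mem_closure h (by simp [Form.updF, Form.closure, Form.mem_closure_self])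
  rw [sat_updF_atom, ih _ hpre (Form.complexity_pre_lt hU e e _) x,
    ih _ hpost (Form.complexity_post_lt hU e e p _) x,
    Deriv.imp_iff_of_biImp (Deriv.updAtom U e hU p), x.imp_imp_iff hL.wf hpre (hU.post e p)]

lemma truth_updF_top (hL : Closed L) (h : .updF U e ⊤' ∈ L) : Truth L (.updF U e ⊤') := by
  have hU := (Form.wf_updF_iff.1 (hL.wf _ h)).1
  exact fun x => ⟨fun _ => Deriv.weaken (x.wf_desc hL.wf) (.necUpd U e hU Deriv.top),
    fun _ _ => trivial⟩

lemma truth_updF_bot (hL : Closed L) (h : .updF U e ⊥' ∈ L)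
    (ih : TruthBelow L (Form.updF U e ⊥').complexity) : Truth L (.updF U e ⊥') := fun x => by
  have hU := (Form.wf_updF_iff.1 (hL.wf _ h)).1
  have hpre : U.pre e ∈ L :=
    hL.mem_of_mem_closure h (by simp [Form.updF, Form.closure, Form.mem_closure_self])
  rw [sat_updF_bot, ih _ hpre (Form.complexity_pre_lt hU e e _) x,
    Deriv.imp_updF_bot_iff hU e, x.imp_neg_iff hL.wf hpre]

lemma truth_updF_neg (hL : Closed L) {φ : Form A P} (h : .updF U e (∼φ) ∈ L)
    (ih : TruthBelow L (Form.updF U e (∼φ)).complexity) : Truth L (.updF U e (∼φ)) := fun x => by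
  obtain ⟨hU, hφ⟩ := Form.wf_updF_iff.1 (hL.wf _ h)
  have hpre : U.pre e ∈ L :=
    hL.mem_of_mem_closure h (by simp [Form.updF, Form.closure, Form.mem_closure_self])
  have hUφ : .updF U e φ ∈ L :=
    hL.mem_of_mem_closure h (by simp [Form.updF, Form.closure, Form.mem_closure_self])
  rw [sat_updF_neg, ih _ hpre (Form.complexity_pre_lt hU e e _) x,
    ih _ hUφ (Form.complexity_updF_lt_updF e e (by simp only [Form.complexity]; omega)) x,
    Deriv.imp_iff_of_biImp (Deriv.updNeg U e hU φ hφ),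
    x.imp_imp_iff hL.wf hpre (Form.wf_neg.2 (hU.updF e (φ := φ) hφ)), x.imp_neg_iff hL.wf hUφ]

lemma truth_updF_and (hL : Closed L) {φ ψ : Form A P} (h : .updF U e (φ ⋏ ψ) ∈ L)
    (ih : TruthBelow L (Form.updF U e (φ ⋏ ψ)).complexity) :
    Truth L (.updF U e (φ ⋏ ψ)) := fun x => by
  obtain ⟨hU, hφ, hψ⟩ := Form.wf_updF_iff.1 (hL.wf _ h)
  have hUφ : .updF U e φ ∈ L :=
    hL.mem_of_mem_closure h (by simp [Form.updF, Form.closure, Form.mem_closure_self])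
  have hUψ : .updF U e ψ ∈ L :=
    hL.mem_of_mem_closure h (by simp [Form.updF, Form.closure, Form.mem_closure_self])
  rw [sat_updF_and,
    ih _ hUφ (Form.complexity_updF_lt_updF e e (by simp only [Form.complexity]; omega)) x,
    ih _ hUψ (Form.complexity_updF_lt_updF e e (by simp only [Form.complexity]; omega)) x,
    Deriv.imp_iff_of_biImp (Deriv.updAnd U e hU φ ψ hφ hψ), Deriv.imp_and_iff]

lemma truth_updF_box (hL : Closed L) {a : A} {φ : Form A P} (h : .updF U e (.box a φ) ∈ L)
    (ih : TruthBelow L (Form.updF U e (.box a φ)).complexity) :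
    Truth L (.updF U e (.box a φ)) := fun x => by
  obtain ⟨hU, hφ⟩ := Form.wf_updF_iff.1 (hL.wf _ h)
  have : Finite U.E := hU.2.1
  have hpre : U.pre e ∈ L :=
    hL.mem_of_mem_closure h (by simp [Form.updF, Form.closure, Form.mem_closure_self])
  have hbox : ∀ f, .box a (.updF U f φ) ∈ L := fun f =>
    hL.mem_of_mem_closure h (by simp [Form.updF, Form.closure, mem_listAll])
  have hwf : ∀ χ ∈ (listWhere {f | U.rel a e f}).map (fun f => Form.box a (.updF U f φ)), χ.WF := by
    simpa using fun f _ => hU.updF f (Form.wf_box.1 hφ)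
  rw [sat_updF_box, ih _ hpre (Form.complexity_pre_lt hU e e _) x,
    Deriv.imp_iff_of_biImp
      (Deriv.updBox U e hU a φ hφ (listWhere {f | U.rel a e f}) fun _ => mem_listWhere),
    x.imp_imp_iff hL.wf hpre (Form.wf_bigAnd.2 hwf), Deriv.imp_bigAnd_iff (x.wf_desc hL.wf) hwf]
  simp only [List.forall_mem_map, mem_listWhere, Set.mem_ofPred_eq]
  exact imp_congr_right fun _ => forall₂_congr fun f _ =>
    ih _ (hbox f) (Form.complexity_box_updF_lt e f a φ) x

lemma truth_updF_updF (hL : Closed L) {U' : Upd A P} {e' : U'.E} {φ : Form A P}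
    (h : .updF U e (.updF U' e' φ) ∈ L)
    (ih : TruthBelow L (Form.updF U e (.updF U' e' φ)).complexity) :
    Truth L (.updF U e (.updF U' e' φ)) := fun x => by
  obtain ⟨hU, hφ'⟩ := Form.wf_updF_iff.1 (hL.wf _ h)
  obtain ⟨hU', hφ⟩ := Form.wf_updF_iff.1 hφ'
  have hcomp : .updF (U.comp U') (e, e') φ ∈ L :=
    hL.mem_of_mem_closure h (by simp [Form.updF, Form.closure, Form.mem_closure_self])
  rw [sat_updF_updF, ih _ hcomp (Form.complexity_updF_comp_lt hU hU' e e' φ) x,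
    Deriv.imp_iff_of_biImp (Deriv.updComp U e U' e' hU hU' φ hφ)]

lemma _root_.Form.Closed.mem_of_updF_cbox_mem (hL : Closed L) {B : Set A} {φ : Form A P}
    (h : .updF U e (.cbox B φ) ∈ L) (f : U.E) :
    U.pre f ∈ L ∧ .updF U f φ ∈ L ∧ ∀ a, .box a (.updF U f (.cbox B φ)) ∈ L := by
  obtain ⟨hU, hφ⟩ := Form.wf_updF_iff.1 (hL.wf _ h)
  have hmem : ∀ χ ∈ (U.pre f).closure (hU.pre f) ++ (Form.updF U f φ).closure (hU.updF f hφ),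
      χ ∈ L := fun χ hχ => hL.mem_of_mem_closure h <| by
    simp only [Form.updF, Form.closure, List.mem_flatMap]
    exact ⟨f, mem_listAll _ f, .tail _ (List.mem_append_right _ hχ)⟩
  exact ⟨hmem _ (List.mem_append_left _ (Form.mem_closure_self _ _)),
    hmem _ (List.mem_append_right _ (Form.mem_closure_self _ _)),
    fun a => hL.mem_of_mem_closure h (by simp [Form.updF, Form.closure, mem_listAll])⟩

lemma imp_updF_cbox_of_sat (hL : Closed L) {B : Set A} {φ : Form A P}
    (h : .updF U e (.cbox B φ) ∈ L) (ih : TruthBelow L (Form.updF U e (.cbox B φ)).complexity)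
    {x : State L} (hx : sat (.updF U e (.cbox B φ)) (model L) x) :
    Deriv (x.desc ⟶ .updF U e (.cbox B φ)) := by
  obtain ⟨hU, hφ⟩ := Form.wf_updF_iff.1 (hL.wf _ h)
  have hmem := hL.mem_of_updF_cbox_mem h
  let S (f : U.E) : Set (State L) := {y | sat (.updF U f (.cbox B φ)) (model L) y}
  have himp : ∀ f, Deriv (charForm (S f) ⟶ .updF U f φ) := fun f =>
    charForm_imp hL.wf (hU.updF f hφ) fun y hy =>
      (ih _ (hmem f).2.1 (Form.complexity_updF_lt_updF e f (by simp only [Form.complexity]; omega))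
        y).1 fun hpre => hy hpre _ .refl
  have hinv : ∀ f, ∀ a ∈ B, ∀ g, U.rel a f g →
      Deriv (charForm (S f) ⋏ U.pre f ⟶ .box a (charForm (S g))) := by
    intro f a ha g hfg
    refine Deriv.uncurry (charForm_imp hL.wf (by simpa using ⟨hU.pre f, wf_charForm hL.wf _⟩)
      fun y hy => ?_)
    refine (y.imp_imp_iff hL.wf (hmem f).1 ((Form.wf_box (a := a)).2 (wf_charForm hL.wf (S g)))).2
      fun hypre => ?_
    have hsatpre := (ih _ (hmem f).1 (Form.complexity_pre_lt hU e f _) y).2 hypre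
    exact y.imp_box hL.wf (fun _ _ => hL.mem_of_box_mem) (wf_charForm hL.wf _) fun z hz =>
      z.imp_charForm hL.wf fun _ t ht => hy hsatpre t (.head ⟨a, ha, hz, hfg⟩ ht)
  exact Deriv.imp_trans (x.imp_charForm hL.wf hx) <|
    Deriv.updCK U e hU B φ hφ _ (fun _ => wf_charForm hL.wf _) (fun f _ => himp f)
      fun f _ a ha g hfg => hinv f a ha g hfg

lemma sat_updF_cbox_of_imp (hL : Closed L) {B : Set A} {φ : Form A P}
    (h : .updF U e (.cbox B φ) ∈ L) (ih : TruthBelow L (Form.updF U e (.cbox B φ)).complexity)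
    {x : State L} (hx : Deriv (x.desc ⟶ .updF U e (.cbox B φ))) :
    sat (.updF U e (.cbox B φ)) (model L) x := by
  obtain ⟨hU, hφ⟩ := Form.wf_updF_iff.1 (hL.wf _ h)
  have hmem := hL.mem_of_updF_cbox_mem h
  intro hxpre t hxt
  have ht : Deriv (t.1.1.desc ⟶ .updF U t.1.2 (.cbox B φ)) := by
    induction hxt with
    | refl => exact hx
    | @tail y z _ hyz ihy =>
        obtain ⟨a, ha, hR, hfg⟩ := hyz
        have hypre := (ih _ (hmem _).1 (Form.complexity_pre_lt hU e _ _) _).1 y.2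
        exact hR _ ((hmem _).2.2 a) <| Deriv.imp_trans (Deriv.imp_and_iff.2 ⟨ihy, hypre⟩)
          (Deriv.updF_cbox_and_pre_imp_box hU ha hfg hφ)
  obtain ⟨⟨y, f⟩, hypre⟩ := t
  refine (ih _ (hmem f).2.1 (Form.complexity_updF_lt_updF e f ?_) y).2
    (Deriv.imp_trans ht (Deriv.updF_mono hU (Deriv.cbox_imp_self hφ))) hypre
  simp only [Form.complexity]
  omega

lemma truth_updF_cbox (hL : Closed L) {B : Set A} {φ : Form A P} (h : .updF U e (.cbox B φ) ∈ L)
    (ih : TruthBelow L (Form.updF U e (.cbox B φ)).complexity) :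
    Truth L (.updF U e (.cbox B φ)) :=
  fun _ => ⟨imp_updF_cbox_of_sat hL h ih, sat_updF_cbox_of_imp hL h ih⟩

end Updates

theorem truth_lemma (hL : Closed L) (ψ : Form A P) (hψ : ψ ∈ L) : Truth L ψ :=
  have ih : TruthBelow L ψ.complexity := fun χ hχ _ => truth_lemma hL χ hχ
  match ψ, hψ, ih with
  | .atom p, _, _ => truth_atom p
  | .top, _, _ => truth_top hL
  | .bot, _, _ => truth_bot
  | .neg _, hψ, ih => truth_neg hL hψ ih
  | .and _ _, hψ, ih => truth_and hL hψ ih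
  | .box _ _, hψ, ih => truth_box hL hψ ih
  | .cbox _ _, hψ, ih => truth_cbox hL hψ ih
  | .upd E rel pre post _ (.atom _), hψ, ih => truth_updF_atom (U := ⟨E, rel, pre, post⟩) hL hψ ih
  | .upd E rel pre post _ .top, hψ, _ => truth_updF_top (U := ⟨E, rel, pre, post⟩) hL hψ
  | .upd E rel pre post _ .bot, hψ, ih => truth_updF_bot (U := ⟨E, rel, pre, post⟩) hL hψ ih
  | .upd E rel pre post _ (.neg _), hψ, ih => truth_updF_neg (U := ⟨E, rel, pre, post⟩) hL hψ ih
  | .upd E rel pre post _ (.and _ _), hψ, ih =>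
      truth_updF_and (U := ⟨E, rel, pre, post⟩) hL hψ ih
  | .upd E rel pre post _ (.box _ _), hψ, ih =>
      truth_updF_box (U := ⟨E, rel, pre, post⟩) hL hψ ih
  | .upd E rel pre post _ (.cbox _ _), hψ, ih =>
      truth_updF_cbox (U := ⟨E, rel, pre, post⟩) hL hψ ih
  | .upd E rel pre post _ (.upd E' rel' pre' post' _ _), hψ, ih =>
      truth_updF_updF (U := ⟨E, rel, pre, post⟩) (U' := ⟨E', rel', pre', post'⟩) hL hψ ih
termination_by ψ.complexity

end Canonical

end Completeness

theorem um_completeness_general {A P : Type} [Finite A]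
    (φ : Form A P) (hφ : φ.WF)
    (hvalid : ∀ M : Model A P, Nonempty M.S → ∀ s : M.S, sat φ M s) :
    Deriv φ := by
  have hL := φ.closed_closure hφ
  refine Canonical.deriv_of_forall_imp hL.wf hφ fun x => ?_
  exact (Canonical.truth_lemma hL φ (φ.mem_closure_self hφ) x).1 (hvalid (Canonical.model _) ⟨x⟩ x)

/-- the proof system UM is complete: every formula `φ ∈ L` that is
valid (true in every epistemic state) is derivable in UM. -/
theorem um_completeness {A P : Type} [Finite A] [Countable P]
    (φ : Form A P) (hφ : φ.WF)
    (hvalid : ∀ M : Model A P, Nonempty M.S → ∀ s : M.S, sat φ M s) :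
    Deriv φ :=
  um_completeness_general φ hφ hvalid
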